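/- arXiv:1603.06152 — 2 statements merged into one kernel-verified Lean document; each statement's English description precedes it below -/
import Mathlib

section
/- Let Λ be a noetherian commutative local ring, let A be an associative unital Λ-algebra that is finitely generated as a Λ-module, and let ρ : A → B be a surjective homomorphism of Λ-algebras. Then the induced group homomorphism A^× → B^× on groups of invertible elements is surjective; that is, every unit of B is the image under ρ of a unit of A. -/
/-!
Lift `b ∈ Bˣ` to some `a ∈ A` and pass to the commutative subalgebra `C = Λ[a]`, which is finite
over `Λ`. Since `b⁻¹` is integral over `Λ`, it is a polynomial in `b`, so `ρ` maps `C` onto a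
ring containing `b⁻¹`. It remains to lift units along the quotient `C → C ⧸ ker ρ`. The ideal
`𝔪C` lies in the Jacobson radical of `C` and `C ⧸ 𝔪C` is artinian; modulo its nilradical it
is a finite product of fields, where every unit modulo an ideal visibly lifts to a unit.
-/

open IsLocalRing Polynomial
open scoped IsMulCommutative

theorem Units.inv_mem_adjoin_of_isIntegral {R A : Type*} [CommRing R] [Ring A] [Algebra R A]
    (u : Aˣ) (h : IsIntegral R (↑u⁻¹ : A)) : (↑u⁻¹ : A) ∈ Algebra.adjoin R {(u : A)} := by
  obtain ⟨p, hp, hroot⟩ := h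
  set n := p.natDegree
  have hpow (i : ℕ) (hi : i ≤ n) : (u : A) ^ n * (↑u⁻¹ : A) ^ i = (u : A) ^ (n - i) := by
    rw [← Units.val_pow_eq_pow_val, ← Units.val_pow_eq_pow_val, ← Units.val_pow_eq_pow_val,
      ← Units.val_mul, pow_sub u hi, inv_pow]
  have hsum : (↑u⁻¹ : A) ^ n = -∑ i ∈ Finset.range n, p.coeff i • (↑u⁻¹ : A) ^ i := by
    rw [← aeval_def, hp.as_sum] at hroot
    simp only [map_add, map_pow, aeval_X, map_sum, map_mul, aeval_C, ← Algebra.smul_def] at hroot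
    exact eq_neg_of_add_eq_zero_left hroot
  have hinv : (↑u⁻¹ : A) =
      -∑ i ∈ Finset.range n, p.coeff i • ((u : A) ^ n * (↑u⁻¹ : A) ^ (i + 1)) := by
    calc (↑u⁻¹ : A) = (u : A) ^ n * (↑u⁻¹ : A) ^ n * ↑u⁻¹ := by
          rw [hpow n le_rfl, Nat.sub_self, pow_zero, one_mul]
      _ = _ := by
        rw [hsum, mul_neg, neg_mul, Finset.mul_sum, Finset.sum_mul]
        simp only [mul_smul_comm, smul_mul_assoc, pow_succ, mul_assoc]
  rw [hinv]
  refine neg_mem (sum_mem fun i hi => Subalgebra.smul_mem _ ?_ _)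
  rw [hpow (i + 1) (Finset.mem_range.mp hi)]
  exact pow_mem (Algebra.self_mem_adjoin_singleton R _) _

/-- Units of every quotient `R ⧸ I` lift to units of `R`. -/
def LiftsUnitsModIdeals (R : Type*) [CommRing R] : Prop :=
  ∀ (I : Ideal R) (c c' : R), c * c' - 1 ∈ I → ∃ x ∈ I, IsUnit (c + x)

theorem LiftsUnitsModIdeals.exists_isUnit_map_eq {R S : Type*} [CommRing R] [Ring S]
    (hR : LiftsUnitsModIdeals R) (f : R →+* S) {c c' : R} (h : f c * f c' = 1) :
    ∃ r, IsUnit r ∧ f r = f c := by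
  obtain ⟨x, hx, hunit⟩ := hR (RingHom.ker f) c c' (by simp [h])
  exact ⟨c + x, hunit, by simpa using hx⟩

theorem liftsUnitsModIdeals_pi_field {ι : Type*} (K : ι → Type*) [∀ i, Field (K i)] :
    LiftsUnitsModIdeals (∀ i, K i) := by
  classical
  intro I c c' h
  -- where `c i = 0`, the correction `(c * c' - 1) i = -1` is added; elsewhere nothing is
  let e : ∀ i, K i := fun i => if c i = 0 then 1 else 0
  refine ⟨(c * c' - 1) * e, I.mul_mem_right _ h, Pi.isUnit_iff.mpr fun i => ?_⟩
  by_cases hc : c i = 0 <;> simp [e, hc]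

theorem LiftsUnitsModIdeals.of_ringEquiv {R S : Type*} [CommRing R] [CommRing S] (e : R ≃+* S)
    (hS : LiftsUnitsModIdeals S) : LiftsUnitsModIdeals R := by
  intro I c c' h
  obtain ⟨x, hx, hunit⟩ := hS (I.map e) (e c) (e c') <| by
    simpa using Ideal.mem_map_of_mem e h
  obtain ⟨y, hy, rfl⟩ := (Ideal.mem_map_iff_of_surjective _ e.surjective).mp hx
  exact ⟨y, hy, by simpa using hunit.map e.symm⟩

theorem LiftsUnitsModIdeals.of_quotient {R : Type*} [CommRing R] {J : Ideal R}
    (hJ : J ≤ Ideal.jacobson ⊥) (hR : LiftsUnitsModIdeals (R ⧸ J)) : LiftsUnitsModIdeals R := by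
  intro I c c' h
  obtain ⟨x, hx, hunit⟩ := hR (I.map (Ideal.Quotient.mk J)) _ _
    (by simpa using Ideal.mem_map_of_mem (Ideal.Quotient.mk J) h)
  obtain ⟨y, hy, rfl⟩ :=
    (Ideal.mem_map_iff_of_surjective _ Ideal.Quotient.mk_surjective).mp hx
  have := isLocalHom_of_le_jacobson_bot J hJ
  exact ⟨y, hy, isUnit_of_map_unit (Ideal.Quotient.mk J) _ (by simpa using hunit)⟩

theorem liftsUnitsModIdeals_of_isArtinianRing (R : Type*) [CommRing R] [IsArtinianRing R] :
    LiftsUnitsModIdeals R := by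
  have : IsReduced (R ⧸ nilradical R) :=
    (Ideal.isRadical_iff_quotient_reduced _).mp (Ideal.radical_isRadical _)
  let := IsArtinianRing.fieldOfSubtypeIsMaximal (R ⧸ nilradical R)
  exact .of_quotient (J := nilradical R) Ideal.radical_le_jacobson
    (.of_ringEquiv (IsArtinianRing.equivPi _).toRingEquiv (liftsUnitsModIdeals_pi_field _))

theorem map_maximalIdeal_le_jacobson_bot (Λ R : Type*) [CommRing Λ] [IsLocalRing Λ] [CommRing R]
    [Algebra Λ R] [Algebra.IsIntegral Λ R] :
    (maximalIdeal Λ).map (algebraMap Λ R) ≤ Ideal.jacobson ⊥ := by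
  refine le_sInf fun M ⟨_, hM⟩ => Ideal.map_le_iff_le_comap.mpr ?_
  have := Ideal.isMaximal_comap_of_isIntegral_of_isMaximal (R := Λ) M
  exact (eq_maximalIdeal this).ge

theorem liftsUnitsModIdeals_of_finite (Λ R : Type*) [CommRing Λ] [IsLocalRing Λ] [CommRing R]
    [Algebra Λ R] [Module.Finite Λ R] : LiftsUnitsModIdeals R := by
  have : IsArtinianRing (R ⧸ (maximalIdeal Λ).map (algebraMap Λ R)) := by
    let := Ideal.Quotient.field (maximalIdeal Λ)
    have : Module.Finite (Λ ⧸ maximalIdeal Λ) (R ⧸ (maximalIdeal Λ).map (algebraMap Λ R)) :=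
      .of_restrictScalars_finite Λ _ _
    exact IsArtinianRing.of_finite (Λ ⧸ maximalIdeal Λ) _
  exact .of_quotient (map_maximalIdeal_le_jacobson_bot Λ R)
    (liftsUnitsModIdeals_of_isArtinianRing _)

theorem stmt_0_general (Λ : Type*) [CommRing Λ] [IsLocalRing Λ]
    (A B : Type*) [Ring A] [Ring B] [Algebra Λ A] [Algebra Λ B]
    [Module.Finite Λ A] (ρ : A →ₐ[Λ] B) (hρ : Function.Surjective ρ) :
    ∀ b : Bˣ, ∃ a : Aˣ, ρ a = (b : B) := by
  intro b
  obtain ⟨a, ha⟩ := hρ b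
  let C := Algebra.adjoin Λ {a}
  have : Module.Finite Λ C := Algebra.finite_adjoin_simple_of_isIntegral (.of_finite Λ a)
  have : Module.Finite Λ B := .of_surjective ρ.toLinearMap hρ
  obtain ⟨c', hc'C, hc'⟩ : (↑b⁻¹ : B) ∈ C.map ρ := by
    rw [AlgHom.map_adjoin_singleton, ha]
    exact b.inv_mem_adjoin_of_isIntegral (.of_finite Λ _)
  obtain ⟨r, hr, hra⟩ := (liftsUnitsModIdeals_of_finite Λ C).exists_isUnit_map_eq
    ((ρ : A →+* B).comp C.val) (c := ⟨a, Algebra.self_mem_adjoin_singleton Λ a⟩)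
    (c' := ⟨c', hc'C⟩) (by simp [ha, show ρ c' = ↑b⁻¹ from hc'])
  exact ⟨(hr.map C.val).unit, by simpa [ha] using hra⟩

/-- Let `Λ` be a noetherian commutative local ring, `A` an associative unital `Λ`-algebra
that is finitely generated as a `Λ`-module, and `ρ : A → B` a surjective homomorphism of
`Λ`-algebras. Then every unit of `B` lifts to a unit of `A`. -/
theorem stmt_0 (Λ : Type*) [CommRing Λ] [IsNoetherianRing Λ] [IsLocalRing Λ]
    (A B : Type*) [Ring A] [Ring B] [Algebra Λ A] [Algebra Λ B]
    [Module.Finite Λ A] (ρ : A →ₐ[Λ] B) (hρ : Function.Surjective ρ) :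
    ∀ b : Bˣ, ∃ a : Aˣ, ρ a = (b : B) :=
  stmt_0_general Λ A B ρ hρ
end

section
/- Let R be a semisimple ring and let f : R → S be a surjective ring homomorphism. Then every unit of S lifts to a unit of R; that is, for every invertible element s ∈ S^× there exists an invertible element r ∈ R^× with f(r) = s. -/
/-- Let `R` be a semisimple ring and `f : R → S` a surjective ring homomorphism. Then
every unit of `S` lifts to a unit of `R`. -/
theorem stmt_4 (R S : Type*) [Ring R] [Ring S] [IsSemisimpleRing R]
    (f : R →+* S) (hf : Function.Surjective f) :
    ∀ s : Sˣ, ∃ r : Rˣ, f r = (s : S) := by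
  intro s
  obtain ⟨e, he, hker⟩ := IsSemisimpleRing.ideal_eq_span_idempotent (RingHom.ker f)
  -- e is in the kernel
  have hfe : f e = 0 := by
    have : e ∈ RingHom.ker f := hker ▸ Ideal.subset_span rfl
    exact this
  -- every kernel element is fixed by right multiplication by e
  have hk : ∀ k : R, f k = 0 → k * e = k := by
    intro k hfk
    have : k ∈ Ideal.span {e} := hker ▸ RingHom.mem_ker.mpr hfk
    obtain ⟨r, rfl⟩ := Submodule.mem_span_singleton.mp this
    show r • e * e = r • e
    rw [smul_mul_assoc, he]
  have hex : ∀ x : R, e * x * e = e * x := fun x ↦ hk (e * x) (by simp [hfe])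
  obtain ⟨a, ha⟩ := hf (s : S)
  obtain ⟨b, hb⟩ := hf ((s⁻¹ : Sˣ) : S)
  have key : ∀ x y : R, f x = (s : S) ∨ f y = (s : S) → f (x * y) = 1 →
      (x * (1 - e) + e) * (y * (1 - e) + e) = 1 := by
    intro x y _ hxy
    have h1 : (x * y) * e = x * y - 1 + e := by
      have := hk (x * y - 1) (by simp [hxy])
      rw [sub_mul, one_mul] at this
      exact eq_add_of_sub_eq this
    have h2 : e * y * e = e * y := hex y
    have h3 : e * e = e := he
    have h2' : e * (y * e) = e * y := by rw [← mul_assoc]; exact h2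
    have h1' : x * (y * e) = x * y - 1 + e := by rw [← mul_assoc]; exact h1
    noncomm_ring
    rw [h3, h2', h1']
    abel
  refine ⟨⟨a * (1 - e) + e, b * (1 - e) + e, key a b (Or.inl ha) ?_, key b a (Or.inr ha) ?_⟩, ?_⟩
  · rw [map_mul, ha, hb]; exact s.mul_inv
  · rw [map_mul, ha, hb]; exact s.inv_mul
  · show f (a * (1 - e) + e) = s
    simp [ha, hfe]
end
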